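/- Let S be an η-sparse family of cubes (0 < η < 1) in a dyadic grid, 1 < p ≤ 2, and let u, v be weights. Suppose B is a Young function with B̄ ∈ B_p (i.e., ∫_1^∞ B̄(t)/t^p · dt/t < ∞) and the pair (u,v) satisfies K := sup_Q ‖u^{1/p}‖_{p,Q} ‖v^{−1/p}‖_{B,Q} < ∞. Then the sparse square operator A_S²f(x) = (∑_{Q ∈ S} (⨍_Q |f|)² 𝟙_Q(x))^{1/2} satisfies ‖A_S² f‖_{L^p(u)} ≲ K · ‖M_{B̄}‖_{L^p→L^p} · ‖f‖_{L^p(v)}. -/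

import Mathlib

open Set Filter MeasureTheory
open scoped ENNReal

noncomputable section

/-- A Young function. -/
def IsYoung (Φ : ℝ → ℝ) : Prop :=
  ContinuousOn Φ (Set.Ici 0) ∧ ConvexOn ℝ (Set.Ici 0) Φ ∧
  StrictMonoOn Φ (Set.Ici 0) ∧ (∀ t ∈ Set.Ici (0:ℝ), 0 ≤ Φ t) ∧
  Filter.Tendsto (fun t => Φ t / t) (nhdsWithin 0 (Set.Ioi 0)) (nhds 0) ∧
  Filter.Tendsto (fun t => Φ t / t) Filter.atTop Filter.atTop

/-- The complementary Young function. -/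
def youngConj (Φ : ℝ → ℝ) (t : ℝ) : ℝ := sSup {y : ℝ | ∃ s > 0, y = s * t - Φ s}

/-- Extension of a Young function to `ℝ≥0∞`. -/
def eOrl (Φ : ℝ → ℝ) (z : ℝ≥0∞) : ℝ≥0∞ :=
  if z = ⊤ then ⊤ else ENNReal.ofReal (Φ z.toReal)

/-- The normalized Luxemburg norm on a set. -/
def luxNorm {n : ℕ} (Φ : ℝ → ℝ) (s : Set (Fin n → ℝ)) (F : (Fin n → ℝ) → ℝ≥0∞) : ℝ≥0∞ :=
  sInf {l : ℝ≥0∞ | ∃ lam : ℝ, 0 < lam ∧ l = ENNReal.ofReal lam ∧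
    (∫⁻ x in s, eOrl Φ (F x / ENNReal.ofReal lam)) ≤ volume s}

/-- The Orlicz maximal operator `M_Φ F(x) = sup_{Q ∋ x} ‖F‖_{Φ,Q}` over cubes
(closed balls in the sup norm). -/
def orlMax {n : ℕ} (Φ : ℝ → ℝ) (F : (Fin n → ℝ) → ℝ≥0∞) (x : Fin n → ℝ) : ℝ≥0∞ :=
  ⨆ (c : Fin n → ℝ) (r : ℝ) (_ : 0 < r) (_ : x ∈ Metric.closedBall c r),
    luxNorm Φ (Metric.closedBall c r) F

/-- The sparse square operator `A_S² f = (∑_{Q ∈ S} ⟨|f|⟩_Q² 𝟙_Q)^{1/2}`. -/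
def sparseSq {n : ℕ} {ι : Type} (Qc : ι → Fin n → ℝ) (Qr : ι → ℝ)
    (f : (Fin n → ℝ) → ℝ) (x : Fin n → ℝ) : ℝ≥0∞ :=
  (∑' i, Set.indicator (Metric.closedBall (Qc i) (Qr i))
      (fun _ => ((volume (Metric.closedBall (Qc i) (Qr i)))⁻¹ *
        ∫⁻ y in Metric.closedBall (Qc i) (Qr i), ENNReal.ofReal |f y|) ^ 2) x) ^ (1/2 : ℝ)


/-!
Since `p/2 ≤ 1`, `(A_S² f)^p ≤ ∑_{Q ∈ S} ⟨|f|⟩_Q^p 𝟙_Q`, so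
`‖A_S² f‖_{L^p(u)}^p ≤ ∑_Q ⟨|f|⟩_Q^p u(Q)`.
On each cube, Young's inequality `st ≤ B(s) + B̄(t)` gives the Orlicz Hölder inequality
`⟨|f|⟩_Q ≤ 2 ‖f v^{1/p}‖_{B̄,Q} ‖v^{-1/p}‖_{B,Q}`, and the bump condition turns the term of `Q`
into `(2K)^p ‖f v^{1/p}‖_{B̄,Q}^p |Q|`. Sparseness replaces `|Q|` by `η⁻¹ |E_Q|`, where
`‖f v^{1/p}‖_{B̄,Q} ≤ M_{B̄}(f v^{1/p})`; the sets `E_Q` being disjoint, the sum is at most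
`η⁻¹ ‖M_{B̄}(f v^{1/p})‖_p^p ≤ η⁻¹ N^p ‖f‖_{L^p(v)}^p`.
-/

section Young

variable {B : ℝ → ℝ}

lemma IsYoung.bddAbove_youngConj_set (hB : IsYoung B) {t : ℝ} (ht : 0 ≤ t) :
    BddAbove {y : ℝ | ∃ s > 0, y = s * t - B s} := by
  obtain ⟨S, hS⟩ := eventually_atTop.1 (tendsto_atTop.1 hB.2.2.2.2.2 t)
  refine ⟨max S 0 * t, ?_⟩
  rintro y ⟨s, hs, rfl⟩
  rcases le_or_gt s S with hsS | hSs
  · nlinarith [hB.2.2.2.1 s hs.le, le_max_left S 0]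
  · have hBs : s * t ≤ B s := by
      have := hS s hSs.le
      rwa [le_div_iff₀ hs, mul_comm] at this
    nlinarith [le_max_right S 0]

lemma IsYoung.monotoneOn (hB : IsYoung B) : MonotoneOn B (Ici 0) := hB.2.2.1.monotoneOn

lemma IsYoung.tendsto_atTop (hB : IsYoung B) : Tendsto B atTop atTop := by
  refine (hB.2.2.2.2.2.atTop_mul_atTop₀ tendsto_id).congr' ?_
  filter_upwards [eventually_gt_atTop 0] with t ht
  exact div_mul_cancel₀ _ ht.ne'

lemma IsYoung.mul_le_add_youngConj (hB : IsYoung B) {s t : ℝ} (hs : 0 < s) (ht : 0 ≤ t) :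
    s * t ≤ B s + youngConj B t := by
  have : s * t - B s ≤ youngConj B t := le_csSup (hB.bddAbove_youngConj_set ht) ⟨s, hs, rfl⟩
  linarith

end Young

section Orlicz

variable {Φ : ℝ → ℝ}

@[simp] lemma eOrl_top : eOrl Φ ⊤ = ⊤ := if_pos rfl

lemma monotone_eOrl (hΦ : MonotoneOn Φ (Ici 0)) : Monotone (eOrl Φ) := by
  intro z w hzw
  rcases eq_or_ne w ⊤ with rfl | hw
  · simp
  have hz : z ≠ ⊤ := ne_top_of_le_ne_top hw hzw
  simp only [eOrl, if_neg hz, if_neg hw]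
  exact ENNReal.ofReal_le_ofReal (hΦ ENNReal.toReal_nonneg ENNReal.toReal_nonneg
    (ENNReal.toReal_mono hw hzw))

lemma measurable_eOrl (hΦ : MonotoneOn Φ (Ici 0)) : Measurable (eOrl Φ) :=
  (monotone_eOrl hΦ).measurable

lemma IsYoung.mul_le_eOrl_add_eOrl {B : ℝ → ℝ} (hB : IsYoung B) (a b : ℝ≥0∞) :
    a * b ≤ eOrl B a + eOrl (youngConj B) b := by
  rcases eq_or_ne a ⊤ with rfl | ha
  · simp
  rcases eq_or_ne b ⊤ with rfl | hb
  · simp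
  rcases eq_or_ne a 0 with rfl | ha0
  · simp
  simp only [eOrl, if_neg ha, if_neg hb]
  calc a * b = ENNReal.ofReal (a.toReal * b.toReal) := by
        rw [← ENNReal.toReal_mul, ENNReal.ofReal_toReal (ENNReal.mul_ne_top ha hb)]
    _ ≤ ENNReal.ofReal (B a.toReal + youngConj B b.toReal) :=
        ENNReal.ofReal_le_ofReal (hB.mul_le_add_youngConj (ENNReal.toReal_pos ha0 ha)
          ENNReal.toReal_nonneg)
    _ ≤ _ := ENNReal.ofReal_add_le

lemma iSup_eOrl_natCast_mul_eq_top (hΦ : Tendsto Φ atTop atTop) {z : ℝ≥0∞} (hz : z ≠ 0) :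
    ⨆ k : ℕ, eOrl Φ (k * z) = ⊤ := by
  rcases eq_or_ne z ⊤ with rfl | hzt
  · exact top_unique (le_iSup_of_le 1 (by simp))
  refine ENNReal.eq_top_of_forall_nnreal_le fun r => ?_
  obtain ⟨T, hT⟩ := eventually_atTop.1 (tendsto_atTop.1 hΦ r)
  obtain ⟨k, hk⟩ := exists_nat_ge (T / z.toReal)
  have hkz : T ≤ k * z.toReal := by rwa [div_le_iff₀ (ENNReal.toReal_pos hz hzt)] at hk
  refine le_iSup_of_le k ?_
  simp only [eOrl, if_neg (ENNReal.mul_ne_top (ENNReal.natCast_ne_top k) hzt),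
    ENNReal.toReal_mul, ENNReal.toReal_natCast]
  rw [← ENNReal.ofReal_coe_nnreal]
  exact ENNReal.ofReal_le_ofReal (hT _ hkz)

variable {n : ℕ} {s : Set (Fin n → ℝ)} {F : (Fin n → ℝ) → ℝ≥0∞}

lemma exists_admissible_lt_of_luxNorm_lt {a : ℝ≥0∞} (h : luxNorm Φ s F < a) :
    ∃ lam : ℝ, 0 < lam ∧ ENNReal.ofReal lam < a ∧
      ∫⁻ x in s, eOrl Φ (F x / ENNReal.ofReal lam) ≤ volume s := by
  obtain ⟨_, ⟨lam, hlam, rfl, hadm⟩, hlt⟩ := sInf_lt_iff.1 h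
  exact ⟨lam, hlam, hlt, hadm⟩

lemma ae_ne_top_of_luxNorm_ne_top (hΦ : MonotoneOn Φ (Ici 0)) (hs : volume s ≠ ⊤)
    (hF : Measurable F) (h : luxNorm Φ s F ≠ ⊤) : ∀ᵐ x ∂volume.restrict s, F x ≠ ⊤ := by
  obtain ⟨lam, -, -, hadm⟩ := exists_admissible_lt_of_luxNorm_lt h.lt_top
  filter_upwards [ae_lt_top ((measurable_eOrl hΦ).comp (hF.div_const _))
    (ne_top_of_le_ne_top hs hadm)] with x hx hFx
  simp [hFx, ENNReal.top_div_of_ne_top ENNReal.ofReal_ne_top] at hx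

lemma ae_eq_zero_of_luxNorm_eq_zero (hΦ : MonotoneOn Φ (Ici 0)) (hΦ_top : Tendsto Φ atTop atTop)
    (hs : volume s ≠ ⊤) (hF : Measurable F) (h : luxNorm Φ s F = 0) :
    ∀ᵐ x ∂volume.restrict s, F x = 0 := by
  have hk : ∀ k : ℕ, ∫⁻ x in s, eOrl Φ (k * F x) ≤ volume s := fun k => by
    obtain ⟨lam, -, hlam, hadm⟩ := exists_admissible_lt_of_luxNorm_lt (a := (k : ℝ≥0∞)⁻¹)
      (h ▸ ENNReal.inv_pos.2 (ENNReal.natCast_ne_top k))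
    refine le_trans (lintegral_mono fun x => monotone_eOrl hΦ ?_) hadm
    rw [div_eq_mul_inv, mul_comm (F x)]
    exact mul_le_mul_left (ENNReal.le_inv_iff_le_inv.1 hlam.le) _
  have hsup : ∫⁻ x in s, ⨆ k : ℕ, eOrl Φ (k * F x) ≤ volume s := by
    rw [lintegral_iSup (f := fun (k : ℕ) x => eOrl Φ (k * F x))
      (fun k => (measurable_eOrl hΦ).comp (hF.const_mul _))
      fun k l hkl x => monotone_eOrl hΦ (by gcongr)]
    exact iSup_le hk
  filter_upwards [ae_lt_top (Measurable.iSup fun k => (measurable_eOrl hΦ).comp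
    (hF.const_mul _)) (ne_top_of_le_ne_top hs hsup)] with x hx
  by_contra hFx
  exact hx.ne (iSup_eOrl_natCast_mul_eq_top hΦ_top hFx)

lemma luxNorm_ne_zero (hΦ : MonotoneOn Φ (Ici 0)) (hΦ_top : Tendsto Φ atTop atTop)
    (hs0 : volume s ≠ 0) (hs : volume s ≠ ⊤) (hF : Measurable F) (hF0 : ∀ x, F x ≠ 0) :
    luxNorm Φ s F ≠ 0 := fun h => hs0 <| Measure.restrict_eq_zero.1 <| ae_eq_bot.1 <|
  eventually_false_iff_eq_bot.1 <|
    (ae_eq_zero_of_luxNorm_eq_zero hΦ hΦ_top hs hF h).mono fun x hx => hF0 x hx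

end Orlicz

section Holder

variable {B : ℝ → ℝ} {n : ℕ} {s : Set (Fin n → ℝ)}

lemma IsYoung.setLIntegral_mul_le_of_admissible (hB : IsYoung B) {G H : (Fin n → ℝ) → ℝ≥0∞}
    (hH : Measurable H) {lam mu : ℝ} (hlam : 0 < lam) (hmu : 0 < mu)
    (hG : ∫⁻ x in s, eOrl (youngConj B) (G x / ENNReal.ofReal lam) ≤ volume s)
    (hH' : ∫⁻ x in s, eOrl B (H x / ENNReal.ofReal mu) ≤ volume s) :
    ∫⁻ x in s, G x * H x ≤ ENNReal.ofReal lam * ENNReal.ofReal mu * (volume s * 2) := by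
  set a := ENNReal.ofReal lam
  set b := ENNReal.ofReal mu
  have ha : a ≠ 0 := (ENNReal.ofReal_pos.2 hlam).ne'
  have hb : b ≠ 0 := (ENNReal.ofReal_pos.2 hmu).ne'
  have hpoint : ∀ x, G x * H x ≤ a * b * (eOrl B (H x / b) + eOrl (youngConj B) (G x / a)) := by
    intro x
    calc G x * H x = a * b * (H x / b * (G x / a)) := by
          rw [ENNReal.div_eq_inv_mul, ENNReal.div_eq_inv_mul]
          rw [show a * b * (b⁻¹ * H x * (a⁻¹ * G x)) = (a * a⁻¹) * (b * b⁻¹) * (G x * H x) by ring,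
            ENNReal.mul_inv_cancel ha ENNReal.ofReal_ne_top,
            ENNReal.mul_inv_cancel hb ENNReal.ofReal_ne_top, one_mul, one_mul]
      _ ≤ _ := mul_le_mul_right (hB.mul_le_eOrl_add_eOrl _ _) _
  calc ∫⁻ x in s, G x * H x
      ≤ ∫⁻ x in s, a * b * (eOrl B (H x / b) + eOrl (youngConj B) (G x / a)) :=
        lintegral_mono hpoint
    _ = a * b * ((∫⁻ x in s, eOrl B (H x / b)) + ∫⁻ x in s, eOrl (youngConj B) (G x / a)) := by
        rw [lintegral_const_mul' _ _ (by finiteness), lintegral_add_left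
          (f := fun x => eOrl B (H x / b)) ((measurable_eOrl hB.monotoneOn).comp
            (hH.div_const b))]
    _ ≤ a * b * (volume s * 2) := by
        rw [mul_two]
        exact mul_le_mul_right (add_le_add hH' hG) _

lemma IsYoung.setLAverage_mul_le_two_mul_luxNorm (hB : IsYoung B) (hs0 : volume s ≠ 0)
    (hs : volume s ≠ ⊤) {G H : (Fin n → ℝ) → ℝ≥0∞} (hH : Measurable H)
    (h₁ : luxNorm (youngConj B) s G ≠ 0 ∨ luxNorm B s H ≠ ⊤)
    (h₂ : luxNorm (youngConj B) s G ≠ ⊤ ∨ luxNorm B s H ≠ 0) :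
    (volume s)⁻¹ * ∫⁻ x in s, G x * H x ≤
      2 * (luxNorm (youngConj B) s G * luxNorm B s H) := by
  have hd0 : volume s * 2 ≠ 0 := mul_ne_zero hs0 two_ne_zero
  have hd : volume s * 2 ≠ ⊤ := ENNReal.mul_ne_top hs ENNReal.ofNat_ne_top
  rw [ENNReal.inv_mul_le_iff hs0 hs, ← mul_assoc, mul_comm, ← ENNReal.div_le_iff hd0 hd]
  refine ENNReal.le_mul_of_forall_lt h₁ h₂ fun a' ha' b' hb' => ?_
  obtain ⟨lam, hlam, hlama, hG⟩ := exists_admissible_lt_of_luxNorm_lt ha'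
  obtain ⟨mu, hmu, hmub, hH'⟩ := exists_admissible_lt_of_luxNorm_lt hb'
  rw [ENNReal.div_le_iff hd0 hd]
  calc ∫⁻ x in s, G x * H x
      ≤ ENNReal.ofReal lam * ENNReal.ofReal mu * (volume s * 2) :=
        hB.setLIntegral_mul_le_of_admissible hH hlam hmu hG hH'
    _ ≤ a' * b' * (volume s * 2) := by gcongr

end Holder

section Weighted

variable {B : ℝ → ℝ} {n : ℕ} {s : Set (Fin n → ℝ)}

lemma IsYoung.setLAverage_le_two_mul_luxNorm_rpow (hB : IsYoung B) (hs0 : volume s ≠ 0)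
    (hs : volume s ≠ ⊤) {F w : (Fin n → ℝ) → ℝ≥0∞} (hw : Measurable w) (hw_top : ∀ x, w x ≠ ⊤)
    {r : ℝ} (hr : 0 < r) (hW : luxNorm B s (fun x => w x ^ (-r)) ≠ ⊤) :
    (volume s)⁻¹ * ∫⁻ x in s, F x ≤
      2 * (luxNorm (youngConj B) s (fun x => F x * w x ^ r) *
        luxNorm B s (fun x => w x ^ (-r))) := by
  have hWm : Measurable fun x => w x ^ (-r) := hw.pow_const _
  have hW0 : luxNorm B s (fun x => w x ^ (-r)) ≠ 0 :=
    luxNorm_ne_zero hB.monotoneOn hB.tendsto_atTop hs0 hs hWm fun x => by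
      simp [ENNReal.rpow_eq_zero_iff, hw_top x, hr.le]
  refine le_trans ?_ (hB.setLAverage_mul_le_two_mul_luxNorm hs0 hs hWm (Or.inr hW) (Or.inr hW0))
  refine mul_le_mul_right (lintegral_mono_ae ?_) _
  -- where `w x = 0` the right side is `F x * 0 * ⊤ = 0`; this happens only on a null set
  filter_upwards [ae_ne_top_of_luxNorm_ne_top hB.monotoneOn hs hWm hW] with x hx
  rw [ENNReal.rpow_neg] at hx ⊢
  rw [mul_assoc, ENNReal.mul_inv_cancel (ENNReal.inv_ne_top.1 hx)
    (ENNReal.rpow_ne_top_of_nonneg hr.le (hw_top x)), mul_one]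

lemma IsYoung.setLAverage_rpow_mul_setLIntegral_le (hB : IsYoung B) {p : ℝ} (hp : 0 < p)
    (hs0 : volume s ≠ 0) (hs : volume s ≠ ⊤) {F u w : (Fin n → ℝ) → ℝ≥0∞} (hw : Measurable w)
    (hw_top : ∀ x, w x ≠ ⊤) {K : ℝ≥0∞} (hK_top : K ≠ ⊤)
    (hK : ((volume s)⁻¹ * ∫⁻ x in s, u x) ^ (1/p) * luxNorm B s (fun x => w x ^ (-(1/p))) ≤ K) :
    ((volume s)⁻¹ * ∫⁻ x in s, F x) ^ p * ∫⁻ x in s, u x ≤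
      (2 * K) ^ p * (luxNorm (youngConj B) s (fun x => F x * w x ^ (1/p)) ^ p * volume s) := by
  set U := (volume s)⁻¹ * ∫⁻ x in s, u x
  set A := (volume s)⁻¹ * ∫⁻ x in s, F x
  set L := luxNorm (youngConj B) s (fun x => F x * w x ^ (1/p))
  have hp' : 0 < 1/p := one_div_pos.2 hp
  have hAU : A * U ^ (1/p) ≤ 2 * K * L := by
    rcases eq_or_ne U 0 with hU | hU
    · rw [hU, ENNReal.zero_rpow_of_pos hp', mul_zero]
      exact zero_le
    have hU' : U ^ (1/p) ≠ 0 := fun h => hU ((ENNReal.rpow_eq_zero_iff_of_pos hp').1 h)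
    have hW : luxNorm B s (fun x => w x ^ (-(1/p))) ≠ ⊤ := fun h =>
      hK_top (top_le_iff.1 (by rwa [h, ENNReal.mul_top hU'] at hK))
    calc A * U ^ (1/p)
        ≤ 2 * (L * luxNorm B s (fun x => w x ^ (-(1/p)))) * U ^ (1/p) :=
          mul_le_mul_left (hB.setLAverage_le_two_mul_luxNorm_rpow hs0 hs hw hw_top hp' hW) _
      _ = 2 * L * (U ^ (1/p) * luxNorm B s (fun x => w x ^ (-(1/p)))) := by ring
      _ ≤ 2 * L * K := by gcongr
      _ = 2 * K * L := by ring
  have hu : ∫⁻ x in s, u x = (U ^ (1/p)) ^ p * volume s := by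
    rw [← ENNReal.rpow_mul, one_div_mul_cancel hp.ne', ENNReal.rpow_one, mul_comm, ← mul_assoc,
      ENNReal.mul_inv_cancel hs0 hs, one_mul]
  calc A ^ p * ∫⁻ x in s, u x = (A * U ^ (1/p)) ^ p * volume s := by
        rw [hu, ENNReal.mul_rpow_of_nonneg A _ hp.le, mul_assoc]
    _ ≤ (2 * K * L) ^ p * volume s := by gcongr
    _ = (2 * K) ^ p * (L ^ p * volume s) := by
        rw [ENNReal.mul_rpow_of_nonneg _ _ hp.le, mul_assoc]

end Weighted

theorem ENNReal.rpow_tsum_le_tsum_rpow {ι : Type*} (g : ι → ℝ≥0∞) {q : ℝ} (hq0 : 0 < q)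
    (hq1 : q ≤ 1) : (∑' i, g i) ^ q ≤ ∑' i, g i ^ q := by
  have hfin : ∀ F : Finset ι, (∑ i ∈ F, g i) ^ q ≤ ∑ i ∈ F, g i ^ q := by
    classical
    intro F
    induction F using Finset.induction_on with
    | empty => simp [ENNReal.zero_rpow_of_pos hq0]
    | insert a F ha ih =>
      rw [Finset.sum_insert ha, Finset.sum_insert ha]
      exact (ENNReal.rpow_add_le_add_rpow _ _ hq0.le hq1).trans (by gcongr)
  calc (∑' i, g i) ^ q = ⨆ F : Finset ι, (∑ i ∈ F, g i) ^ q := by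
        rw [ENNReal.tsum_eq_iSup_sum]
        exact (ENNReal.orderIsoRpow q hq0).map_iSup _
    _ ≤ ∑' i, g i ^ q := iSup_le fun F => (hfin F).trans (ENNReal.sum_le_tsum F)

theorem ENNReal.rpow_one_div_le_mul_rpow_one_div_iff {a b c : ℝ≥0∞} {p : ℝ} (hp : 0 < p) :
    a ^ (1/p) ≤ c * b ^ (1/p) ↔ a ≤ c ^ p * b := by
  rw [← ENNReal.rpow_le_rpow_iff hp, ENNReal.mul_rpow_of_nonneg _ _ hp.le, ← ENNReal.rpow_mul,
    ← ENNReal.rpow_mul, one_div_mul_cancel hp.ne', ENNReal.rpow_one, ENNReal.rpow_one]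

theorem ENNReal.ofReal_mul_rpow_neg_one_div_rpow {a η p : ℝ} (ha : 0 ≤ a) (hη : 0 < η)
    (hp : 0 < p) :
    ENNReal.ofReal (a * η ^ (-(1/p))) ^ p = ENNReal.ofReal a ^ p * (ENNReal.ofReal η)⁻¹ := by
  rw [ENNReal.ofReal_rpow_of_nonneg (by positivity) hp.le, Real.mul_rpow ha (by positivity),
    ← Real.rpow_mul hη.le, neg_mul, one_div_mul_cancel hp.ne', Real.rpow_neg_one,
    ENNReal.ofReal_mul (by positivity), ENNReal.ofReal_inv_of_pos hη,
    ENNReal.ofReal_rpow_of_nonneg ha hp.le]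

section Sparse

variable {X ι : Type*}

lemma rpow_tsum_indicator_sq_le (Q : ι → Set X) (a : ι → ℝ≥0∞) {p : ℝ} (hp0 : 0 < p)
    (hp2 : p ≤ 2) (x : X) :
    ((∑' i, (Q i).indicator (fun _ => a i ^ 2) x) ^ (1/2 : ℝ)) ^ p ≤
      ∑' i, (Q i).indicator (fun _ => a i ^ p) x := by
  rw [← ENNReal.rpow_mul]
  refine (ENNReal.rpow_tsum_le_tsum_rpow _ (by positivity) (by linarith)).trans_eq
    (tsum_congr fun i => ?_)
  by_cases hx : x ∈ Q i
  · rw [Set.indicator_of_mem hx, Set.indicator_of_mem hx, ← ENNReal.rpow_natCast,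
      ← ENNReal.rpow_mul]
    congr 1
    ring
  · rw [Set.indicator_of_notMem hx, Set.indicator_of_notMem hx,
      ENNReal.zero_rpow_of_pos (by positivity)]

variable [MeasurableSpace X]

lemma lintegral_tsum_indicator_mul [Countable ι] {μ : Measure X} {Q : ι → Set X}
    (hQ : ∀ i, MeasurableSet (Q i)) (b : ι → ℝ≥0∞) {w : X → ℝ≥0∞} (hw : Measurable w) :
    ∫⁻ x, (∑' i, (Q i).indicator (fun _ => b i) x) * w x ∂μ = ∑' i, b i * ∫⁻ x in Q i, w x ∂μ := by
  simp_rw [← ENNReal.tsum_mul_right]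
  rw [lintegral_tsum (f := fun i x => (Q i).indicator (fun _ => b i) x * w x)
    fun i => ((measurable_const.indicator (hQ i)).mul hw).aemeasurable]
  refine tsum_congr fun i => ?_
  simp_rw [← Set.indicator_mul_left]
  rw [lintegral_indicator (hQ i), lintegral_const_mul _ hw]

lemma tsum_mul_measure_le_of_sparse [Countable ι] {μ : Measure X} {Q E : ι → Set X}
    {c : ℝ≥0∞} (hc0 : c ≠ 0) (hc : c ≠ ⊤) (hE : ∀ i, MeasurableSet (E i))
    (hdisj : Pairwise (Function.onFun Disjoint E)) (hQE : ∀ i, c * μ (Q i) ≤ μ (E i))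
    {a : ι → ℝ≥0∞} {g : X → ℝ≥0∞} (hag : ∀ i, ∀ x ∈ E i, a i ≤ g x) :
    ∑' i, a i * μ (Q i) ≤ c⁻¹ * ∫⁻ x, g x ∂μ := by
  calc ∑' i, a i * μ (Q i) ≤ ∑' i, c⁻¹ * ∫⁻ x in E i, g x ∂μ := by
        refine ENNReal.tsum_le_tsum fun i => ?_
        calc a i * μ (Q i) ≤ a i * (c⁻¹ * μ (E i)) := by
              gcongr
              rw [← ENNReal.div_eq_inv_mul, ENNReal.le_div_iff_mul_le (Or.inl hc0) (Or.inl hc),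
                mul_comm]
              exact hQE i
          _ = c⁻¹ * ∫⁻ _ in E i, a i ∂μ := by rw [setLIntegral_const]; ring
          _ ≤ c⁻¹ * ∫⁻ x in E i, g x ∂μ := mul_le_mul_right (setLIntegral_mono' (hE i) (hag i)) _
    _ = c⁻¹ * ∫⁻ x in ⋃ i, E i, g x ∂μ := by rw [ENNReal.tsum_mul_left, lintegral_iUnion hE hdisj]
    _ ≤ c⁻¹ * ∫⁻ x, g x ∂μ := mul_le_mul_right (setLIntegral_le_lintegral _ _) _

lemma countable_of_pairwise_disjoint_of_measure_pos {μ : Measure X} [SFinite μ] {E : ι → Set X}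
    (hE : ∀ i, MeasurableSet (E i)) (hdisj : Pairwise (Function.onFun Disjoint E))
    (hpos : ∀ i, 0 < μ (E i)) : Countable ι :=
  Set.countable_univ_iff.1 <| by
    convert Measure.countable_meas_pos_of_disjoint_iUnion (μ := μ) hE hdisj
    exact (Set.eq_univ_of_forall hpos).symm

end Sparse

lemma lintegral_sparseSq_rpow_mul_le {n : ℕ} {ι : Type} [Countable ι] (Qc : ι → Fin n → ℝ)
    (Qr : ι → ℝ) (f : (Fin n → ℝ) → ℝ) {p : ℝ} (hp0 : 0 < p) (hp2 : p ≤ 2)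
    {w : (Fin n → ℝ) → ℝ≥0∞} (hw : Measurable w) :
    ∫⁻ x, sparseSq Qc Qr f x ^ p * w x ≤
      ∑' i, ((volume (Metric.closedBall (Qc i) (Qr i)))⁻¹ *
          ∫⁻ y in Metric.closedBall (Qc i) (Qr i), ENNReal.ofReal |f y|) ^ p *
        ∫⁻ x in Metric.closedBall (Qc i) (Qr i), w x := by
  rw [← lintegral_tsum_indicator_mul (fun _ => measurableSet_closedBall) _ hw]
  exact lintegral_mono fun x => mul_le_mul_left (rpow_tsum_indicator_sq_le _ _ hp0 hp2 x) _

lemma luxNorm_le_orlMax {n : ℕ} {Φ : ℝ → ℝ} {F : (Fin n → ℝ) → ℝ≥0∞} {c x : Fin n → ℝ} {r : ℝ}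
    (hr : 0 < r) (hx : x ∈ Metric.closedBall c r) :
    luxNorm Φ (Metric.closedBall c r) F ≤ orlMax Φ F x :=
  le_iSup₂_of_le c r (le_iSup₂_of_le hr hx le_rfl)

/-- **Two-weight bump estimate for the sparse square function, `1 < p ≤ 2`:**
if `B̄ ∈ B_p`, `sup_Q ‖u^{1/p}‖_{p,Q}‖v^{-1/p}‖_{B,Q} ≤ K < ∞` and `M_{B̄}` is bounded
on `L^p` with norm at most `N`, then `‖A_S² f‖_{L^p(u)} ≤ C K N ‖f‖_{L^p(v)}` with `C`
depending only on `p` and the sparseness constant `η`. -/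
theorem stmt_14 (n : ℕ) (p η : ℝ) (hp1 : 1 < p) (hp2 : p ≤ 2) (hη : 0 < η) :
    ∃ C : ℝ, 0 < C ∧
      ∀ (ι : Type) (Qc : ι → Fin n → ℝ) (Qr : ι → ℝ), (∀ i, 0 < Qr i) →
      ∀ E : ι → Set (Fin n → ℝ),
        (∀ i, E i ⊆ Metric.closedBall (Qc i) (Qr i)) →
        (∀ i, MeasurableSet (E i)) →
        (∀ i, ENNReal.ofReal η * volume (Metric.closedBall (Qc i) (Qr i)) ≤ volume (E i)) →
        Pairwise (Function.onFun Disjoint E) →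
      ∀ B : ℝ → ℝ, IsYoung B →
        (∫⁻ t in Set.Ioi (1:ℝ), ENNReal.ofReal (youngConj B t / t ^ p / t)) ≠ ⊤ →
      ∀ u v : (Fin n → ℝ) → ℝ, (∀ x, 0 ≤ u x) → (∀ x, 0 ≤ v x) →
        Measurable u → Measurable v →
      ∀ K : ℝ≥0∞, K ≠ ⊤ →
        (∀ (c : Fin n → ℝ) (r : ℝ), 0 < r →
          ((volume (Metric.closedBall c r))⁻¹ *
              ∫⁻ x in Metric.closedBall c r, ENNReal.ofReal (u x)) ^ (1/p) *
            luxNorm B (Metric.closedBall c r)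
              (fun x => (ENNReal.ofReal (v x)) ^ (-(1/p))) ≤ K) →
      ∀ N : ℝ≥0∞,
        (∀ G : (Fin n → ℝ) → ℝ≥0∞, Measurable G →
          (∫⁻ x, (orlMax (youngConj B) G x) ^ p) ^ (1/p) ≤
            N * (∫⁻ x, (G x) ^ p) ^ (1/p)) →
      ∀ f : (Fin n → ℝ) → ℝ, Measurable f →
        (∫⁻ x, (sparseSq Qc Qr f x) ^ p * ENNReal.ofReal (u x)) ^ (1/p) ≤
          ENNReal.ofReal C * K * N *
            (∫⁻ x, (ENNReal.ofReal |f x|) ^ p * ENNReal.ofReal (v x)) ^ (1/p) := by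
  have hp0 : 0 < p := by linarith
  refine ⟨2 * η ^ (-(1/p)), by positivity, ?_⟩
  intro ι Qc Qr hQr E hEQ hE hEη hdisj B hB _ u v _ _ hu hv K hK_top hK N hN f hf
  set Q : ι → Set (Fin n → ℝ) := fun i => Metric.closedBall (Qc i) (Qr i)
  set G : (Fin n → ℝ) → ℝ≥0∞ := fun x => ENNReal.ofReal |f x| * ENNReal.ofReal (v x) ^ (1/p)
  set J := ∫⁻ x, (ENNReal.ofReal |f x|) ^ p * ENNReal.ofReal (v x)
  have hQ0 : ∀ i, volume (Q i) ≠ 0 := fun i => (Metric.measure_closedBall_pos volume _ (hQr i)).ne'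
  have hη0 : ENNReal.ofReal η ≠ 0 := (ENNReal.ofReal_pos.2 hη).ne'
  have : Countable ι := countable_of_pairwise_disjoint_of_measure_pos hE hdisj fun i =>
    (ENNReal.mul_pos hη0 (hQ0 i)).trans_le (hEη i)
  have hGJ : ∫⁻ x, G x ^ p = J := lintegral_congr fun x => by
    rw [ENNReal.mul_rpow_of_nonneg _ _ hp0.le, ← ENNReal.rpow_mul, one_div_mul_cancel hp0.ne',
      ENNReal.rpow_one]
  have hM : ∫⁻ x, orlMax (youngConj B) G x ^ p ≤ N ^ p * J := hGJ ▸
    (ENNReal.rpow_one_div_le_mul_rpow_one_div_iff hp0).1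
      (hN G (hf.abs.ennreal_ofReal.mul (hv.ennreal_ofReal.pow_const _)))
  rw [ENNReal.rpow_one_div_le_mul_rpow_one_div_iff hp0, ENNReal.mul_rpow_of_nonneg _ _ hp0.le,
    ENNReal.mul_rpow_of_nonneg _ _ hp0.le,
    ENNReal.ofReal_mul_rpow_neg_one_div_rpow zero_le_two hη hp0, ENNReal.ofReal_ofNat]
  calc ∫⁻ x, sparseSq Qc Qr f x ^ p * ENNReal.ofReal (u x)
      ≤ ∑' i, ((volume (Q i))⁻¹ * ∫⁻ y in Q i, ENNReal.ofReal |f y|) ^ p *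
          ∫⁻ x in Q i, ENNReal.ofReal (u x) :=
        lintegral_sparseSq_rpow_mul_le Qc Qr f hp0 hp2 hu.ennreal_ofReal
    _ ≤ ∑' i, (2 * K) ^ p * (luxNorm (youngConj B) (Q i) G ^ p * volume (Q i)) :=
        ENNReal.tsum_le_tsum fun i => hB.setLAverage_rpow_mul_setLIntegral_le hp0 (hQ0 i)
          measure_closedBall_lt_top.ne hv.ennreal_ofReal (fun _ => ENNReal.ofReal_ne_top) hK_top
          (hK _ _ (hQr i))
    _ ≤ (2 * K) ^ p * ((ENNReal.ofReal η)⁻¹ * ∫⁻ x, orlMax (youngConj B) G x ^ p) := by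
        rw [ENNReal.tsum_mul_left]
        exact mul_le_mul_right (tsum_mul_measure_le_of_sparse hη0 ENNReal.ofReal_ne_top hE hdisj
          hEη fun i x hx => by gcongr; exact luxNorm_le_orlMax (hQr i) (hEQ i hx)) _
    _ ≤ (2 * K) ^ p * ((ENNReal.ofReal η)⁻¹ * (N ^ p * J)) := by gcongr
    _ = 2 ^ p * (ENNReal.ofReal η)⁻¹ * K ^ p * N ^ p * J := by
        rw [ENNReal.mul_rpow_of_nonneg _ _ hp0.le]; ring
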